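/- Let n ≥ 2 and let σ = (1,1,...,1,b) ∈ ℤ^{n+1} with b ≥ 1 an integer (n copies of 1). If there exists v ∈ ℤ^{n+1} with ⟨v,v⟩ = 5 and ⟨v,σ⟩ = 0, then b ∈ {1, 2, 4}. -/

import Mathlib

/-!
Split off the last coordinate `c` of `v`. The other coordinates have square sum `A = 5 - c²` and
sum `S = -b c`. Since `x ≤ x²` and `x² ≡ x (mod 2)` for every integer `x`, we get `|S| ≤ A` and
`A ≡ S (mod 2)`; this leaves only `c = ±1`, where `b = |S| ≤ 4` is even.
-/

open Finset

theorem Int.abs_sum_le_sum_mul_self {ι : Type*} (s : Finset ι) (f : ι → ℤ) :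
    |∑ i ∈ s, f i| ≤ ∑ i ∈ s, f i * f i :=
  (abs_sum_le_sum_abs f s).trans <| sum_le_sum fun i _ => by
    rw [Int.abs_eq_natAbs, ← sq]
    exact Int.natAbs_le_self_sq (f i)

theorem Int.even_sum_mul_self_sub_sum {ι : Type*} (s : Finset ι) (f : ι → ℤ) :
    Even (∑ i ∈ s, f i * f i - ∑ i ∈ s, f i) := by
  rw [← sum_sub_distrib]
  exact even_sum _ fun i _ => by simpa [mul_sub] using Int.even_mul_pred_self (f i)

theorem eq_two_or_four_of_sq_add_eq_five {A S b c : ℤ} (hb : 0 < b) (hA : A + c * c = 5)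
    (hS : S + c * b = 0) (hSA : |S| ≤ A) (hpar : Even (A - S)) : b = 2 ∨ b = 4 := by
  obtain ⟨k, hk⟩ := hpar
  obtain ⟨hSA₁, hSA₂⟩ := abs_le.mp hSA
  have hc₁ : -2 ≤ c := by nlinarith
  have hc₂ : c ≤ 2 := by nlinarith
  interval_cases c <;> omega

theorem ones_b_norm_five_general (n : ℕ) (b : ℤ) (hb : 1 ≤ b)
    (σ : Fin (n + 1) → ℤ)
    (hσ : σ = fun i => if i = Fin.last n then b else (1 : ℤ))
    (hv : ∃ v : Fin (n + 1) → ℤ,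
      (∑ k, v k * v k = 5) ∧ (∑ k, v k * σ k = 0)) :
    b = 1 ∨ b = 2 ∨ b = 4 := by
  obtain ⟨v, hv₅, hv₀⟩ := hv
  subst hσ
  rw [Fin.sum_univ_castSucc] at hv₅ hv₀
  simp only [Fin.castSucc_ne_last, if_false, if_true, mul_one] at hv₀
  exact Or.inr <| eq_two_or_four_of_sq_add_eq_five hb hv₅ hv₀
    (Int.abs_sum_le_sum_mul_self _ _) (Int.even_sum_mul_self_sub_sum _ _)

theorem ones_b_norm_five (n : ℕ) (hn : 2 ≤ n) (b : ℤ) (hb : 1 ≤ b)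
    (σ : Fin (n + 1) → ℤ)
    (hσ : σ = fun i => if i = Fin.last n then b else (1 : ℤ))
    (hv : ∃ v : Fin (n + 1) → ℤ,
      (∑ k, v k * v k = 5) ∧ (∑ k, v k * σ k = 0)) :
    b = 1 ∨ b = 2 ∨ b = 4 :=
  ones_b_norm_five_general n b hb σ hσ hv
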